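/- arXiv:0706.1169 — 2 statements merged into one kernel-verified Lean document; each statement's English description precedes it below -/
import Mathlib

section
/- Let B = {c_1, …, c_L} ⊂ ℝ with c_1 < c_2 < ⋯ < c_L, and let σ > 0. Then ∫_ℝ (argmin_{x ∈ B} |σz − x|)² · e^{−z²/2} dz/√(2π) = c_1² + Σ_{i=2}^L (c_i² − c_{i-1}²) · Q((c_i + c_{i-1})/(2σ)), where Q(t) = ∫_t^∞ e^{−u²/2} du/√(2π). -/
/-!
Off the finitely many midpoints `mᵢ = (cᵢ + cᵢ₋₁)/2`, a nearest point to `y` is `c_k` where `k`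
is the number of midpoints below `y`, so `N(y)²` telescopes to
`c₀² + Σᵢ (cᵢ² - cᵢ₋₁²)·[mᵢ < y]`. Integrating this step function against the standard Gaussian
density, the constant contributes `c₀²` and each step `[mᵢ < σz]` contributes `Q(mᵢ/σ)`.
-/

open MeasureTheory ProbabilityTheory

/-- The Gaussian tail function `Q`. -/
noncomputable def gaussQ (t : ℝ) : ℝ :=
  ∫ u in Set.Ioi t, Real.exp (-u ^ 2 / 2) / Real.sqrt (2 * Real.pi)

lemma gaussianPDFReal_zero_one (z : ℝ) :
    gaussianPDFReal 0 1 z = Real.exp (-z ^ 2 / 2) / Real.sqrt (2 * Real.pi) := by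
  simp [gaussianPDFReal, div_eq_inv_mul]

lemma integral_mul_gaussian_of_eq_step {ι : Type*} (s : Finset ι) (a : ℝ) (w t : ι → ℝ)
    {g : ℝ → ℝ} (hg : ∀ z, (∀ i ∈ s, z ≠ t i) → g z = a + ∑ i ∈ s, w i * if t i < z then 1 else 0) :
    ∫ z, g z * (Real.exp (-z ^ 2 / 2) / Real.sqrt (2 * Real.pi))
      = a + ∑ i ∈ s, w i * gaussQ (t i) := by
  simp only [gaussQ, ← gaussianPDFReal_zero_one]
  set φ := gaussianPDFReal 0 1
  have hφ : Integrable φ := integrable_gaussianPDFReal 0 1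
  have hw : ∀ i ∈ s, Integrable fun z => w i * (Set.Ioi (t i)).indicator φ z :=
    fun i _ => (hφ.indicator measurableSet_Ioi).const_mul (w i)
  have hstep : ∀ᵐ z, g z * φ z = a * φ z + ∑ i ∈ s, w i * (Set.Ioi (t i)).indicator φ z := by
    filter_upwards [(Filter.eventually_all_finset s).2 fun i _ => volume.ae_ne (t i)] with z hz
    rw [hg z hz, add_mul, Finset.sum_mul]
    congr 1
    refine Finset.sum_congr rfl fun i _ => ?_
    by_cases h : t i < z <;> simp [h]
  rw [integral_congr_ae hstep, integral_add (hφ.const_mul a) (integrable_finsetSum _ hw),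
    integral_const_mul, integral_finsetSum _ hw, integral_gaussianPDFReal_eq_one 0 one_ne_zero,
    mul_one]
  simp only [integral_const_mul, integral_indicator measurableSet_Ioi]

lemma add_sum_Ico_sub_mul_ite_le (f : ℕ → ℝ) {k L : ℕ} (hk : k < L) :
    f 0 + ∑ i ∈ Finset.Ico 1 L, (f i - f (i - 1)) * (if i ≤ k then 1 else 0) = f k := by
  have hfilter : (Finset.Ico 1 L).filter (· ≤ k) = Finset.Ico 1 (k + 1) := by
    ext i; simp only [Finset.mem_filter, Finset.mem_Ico]; omega
  simp only [mul_ite, mul_one, mul_zero, ← Finset.sum_filter, hfilter,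
    Finset.sum_Ico_eq_sum_range, add_tsub_cancel_right, add_tsub_cancel_left]
  rw [Finset.sum_congr rfl fun j _ => by rw [add_comm 1 j], Finset.sum_range_sub]
  ring

lemma midpoint_le_of_abs_sub_le_abs_sub {a b y : ℝ} (hab : a < b) (h : |y - b| ≤ |y - a|) :
    (a + b) / 2 ≤ y := by
  nlinarith [sq_le_sq.mpr h]

lemma le_midpoint_of_abs_sub_le_abs_sub {a b y : ℝ} (hab : a < b) (h : |y - a| ≤ |y - b|) :
    y ≤ (a + b) / 2 := by
  nlinarith [sq_le_sq.mpr h]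

lemma midpoint_lt_iff_le_of_nearest {c : ℕ → ℝ} {L k i : ℕ} (hc : StrictMonoOn c (Set.Iio L))
    {y : ℝ} (hk : k < L) (hnear : ∀ j < L, |y - c k| ≤ |y - c j|) (hi : 1 ≤ i) (hiL : i < L)
    (hy : y ≠ (c i + c (i - 1)) / 2) :
    (c i + c (i - 1)) / 2 < y ↔ i ≤ k := by
  have hi' : i - 1 < L := by omega
  constructor
  · intro hlt
    by_contra! hki
    have hy_le := le_midpoint_of_abs_sub_le_abs_sub (hc hk hiL hki) (hnear i hiL)
    have hck : c k ≤ c (i - 1) := hc.monotoneOn hk hi' (by omega)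
    linarith
  · intro hik
    have hy_ge := midpoint_le_of_abs_sub_le_abs_sub (hc hi' hk (by omega)) (hnear (i - 1) hi')
    have hck : c i ≤ c k := hc.monotoneOn hiL hk hik
    exact lt_of_le_of_ne (by linarith) hy.symm

theorem gaussian_nearest_point_second_moment_general
    (L : ℕ) (c : ℕ → ℝ)
    (hc : ∀ i j, i < j → j < L → c i < c j)
    (σ : ℝ) (hσ : 0 < σ)
    (N : ℝ → ℝ)
    (hNmem : ∀ y, ∃ i < L, N y = c i)
    (hNmin : ∀ y, ∀ i < L, |y - N y| ≤ |y - c i|) :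
    ∫ z : ℝ, (N (σ * z)) ^ 2 * (Real.exp (-z ^ 2 / 2) / Real.sqrt (2 * Real.pi))
      = c 0 ^ 2 + ∑ i ∈ Finset.Ico 1 L,
          (c i ^ 2 - c (i - 1) ^ 2) * gaussQ ((c i + c (i - 1)) / (2 * σ)) := by
  have hc' : StrictMonoOn c (Set.Iio L) := fun i hi j hj hij => hc i j hij hj
  have hscale : ∀ m z : ℝ, m / (2 * σ) < z ↔ m / 2 < σ * z := fun m z => by
    rw [div_lt_iff₀ (by positivity), div_lt_iff₀ two_pos]; ring_nf
  refine integral_mul_gaussian_of_eq_step _ _ _ _ fun z hz => ?_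
  obtain ⟨k, hk, hNk⟩ := hNmem (σ * z)
  have hnear : ∀ j < L, |σ * z - c k| ≤ |σ * z - c j| := hNk ▸ hNmin (σ * z)
  rw [hNk, ← add_sum_Ico_sub_mul_ite_le (fun i => c i ^ 2) hk]
  refine congrArg _ (Finset.sum_congr rfl fun i hi => ?_)
  obtain ⟨hi1, hiL⟩ := Finset.mem_Ico.mp hi
  have hy : σ * z ≠ (c i + c (i - 1)) / 2 := fun h => hz i hi (by field_simp; linarith)
  simp only [hscale,
    midpoint_lt_iff_le_of_nearest hc' hk hnear hi1 hiL hy]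

/-- Gaussian average of the squared nearest lattice point: for
`B = {c₀ < c₁ < ⋯ < c_{L-1}}` and any nearest-point selector `N`,
`∫ (N(σz))² e^{-z²/2} dz/√(2π)
  = c₀² + Σ_{i=1}^{L-1} (cᵢ² - c_{i-1}²) Q((cᵢ + c_{i-1})/(2σ))`. -/
theorem gaussian_nearest_point_second_moment
    (L : ℕ) (hL : 1 ≤ L) (c : ℕ → ℝ)
    (hc : ∀ i j, i < j → j < L → c i < c j)
    (σ : ℝ) (hσ : 0 < σ)
    (N : ℝ → ℝ)
    (hNmem : ∀ y, ∃ i < L, N y = c i)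
    (hNmin : ∀ y, ∀ i < L, |y - N y| ≤ |y - c i|) :
    ∫ z : ℝ, (N (σ * z)) ^ 2 * (Real.exp (-z ^ 2 / 2) / Real.sqrt (2 * Real.pi))
      = c 0 ^ 2 + ∑ i ∈ Finset.Ico 1 L,
          (c i ^ 2 - c (i - 1) ^ 2) * gaussQ ((c i + c (i - 1)) / (2 * σ)) :=
  gaussian_nearest_point_second_moment_general L c hc σ hσ N hNmem hNmin
end

section
/- With the substitution p = √((1−α)² + 4αb) (so b = (p² − (1−α)²)/(4α)), and R(w) = (1−α−√((1−α)²−4αw))/(2αw), the energy per symbol E_s = q·(R(−b) − bR′(−b)) equals q/p. -/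
/-- With `p = √((1-α)² + 4αb)` and the R-transform
`R(w) = (1 - α - √((1-α)² - 4αw))/(2αw)` (with the stated derivative), the
energy per symbol `E_s = q (R(-b) - b R′(-b))` equals `q/p`. -/
theorem rectangular_channel_energy
    (α b q : ℝ) (hα : 0 < α) (hb : 0 < b) (hq : 0 < q) :
    q * ((1 - α - Real.sqrt ((1 - α) ^ 2 - 4 * α * (-b))) / (2 * α * (-b))
        - b * ((1 - α - Real.sqrt ((1 - α) ^ 2 - 4 * α * (-b))) ^ 2
            / (4 * α * (-b) ^ 2 * Real.sqrt ((1 - α) ^ 2 - 4 * α * (-b)))))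
      = q / Real.sqrt ((1 - α) ^ 2 + 4 * α * b) := by
  rw [show (1 - α) ^ 2 - 4 * α * (-b) = (1 - α) ^ 2 + 4 * α * b by ring]
  set s := Real.sqrt ((1 - α) ^ 2 + 4 * α * b) with hsdef
  have harg : 0 < (1 - α) ^ 2 + 4 * α * b := by positivity
  have hs : 0 < s := Real.sqrt_pos.mpr harg
  have hs2 : s ^ 2 = (1 - α) ^ 2 + 4 * α * b := Real.sq_sqrt harg.le
  field_simp
  linear_combination 2 * hs2
end
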